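/- Consider two disjoint finite vertex sets: V_{ES} (the epitope together with the shadow paratope V_S ⊆ V_{ES}) and V_A (the antibody, with native paratope V_P ⊆ V_A), together with a bijection σ : V_S → V_P. Each graph has its own neighborhoods (neighbors of a vertex lie in its own vertex set), channel sizes c(i) ≤ C with c(i) = c(σ(i)) for i ∈ V_S, hidden states h(i) ∈ ℝ^{d'}, and coordinates X(i) ∈ ℝ^{3×c(i)}. The L-layer alternating encoder repeats, for l = 1, …, L (with arbitrary, possibly layer-specific, functions φ_m, φ_x, φ_h): apply one message-passing layer (Eqs. m_{ij}, X_{ij}, h', X' built from T_R and T_S as in the adaptive multi-channel encoder) to the graph on V_A; set h(i) := h(σ(i)) for all i ∈ V_S; apply one message-passing layer to the graph on V_{ES}; set h(σ(i)) := h(i) for all i ∈ V_S. Then the encoder is independently E(3)-equivariant with respect to V_{ES} and V_A: for any orthogonal matrices Q₁, Q₂ ∈ O(3) and translations t₁, t₂ ∈ ℝ³, if the input coordinates on V_{ES} are replaced by Q₁ X(i) + t₁ 1ᵀ and the input coordinates on V_A by Q₂ X(i) + t₂ 1ᵀ, then all final hidden states are unchanged, the final coordinates on V_{ES} are replaced by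 Q₁ X_final(i) + t₁ 1ᵀ, and the final coordinates on V_A are replaced by Q₂ X_final(i) + t₂ 1ᵀ. -/

import Mathlib

open Matrix BigOperators

attribute [local instance] Classical.propDecidable

noncomputable section

/-- Euclidean distance between the `p`-th column of `X` and the `q`-th column of `Y`. -/
def colDist {ci cj : ℕ} (X : Matrix (Fin 3) (Fin ci) ℝ) (Y : Matrix (Fin 3) (Fin cj) ℝ)
    (p : Fin ci) (q : Fin cj) : ℝ :=
  Real.sqrt (∑ r : Fin 3, (X r p - Y r q) ^ 2)

/-- Rigid (Euclidean) action `g·X = QX + t1ᵀ`, acting columnwise by `x ↦ Qx + t`. -/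
def rigid {c : ℕ} (Q : Matrix (Fin 3) (Fin 3) ℝ) (t : Fin 3 → ℝ)
    (X : Matrix (Fin 3) (Fin c) ℝ) : Matrix (Fin 3) (Fin c) ℝ :=
  Matrix.of fun r p => (∑ s : Fin 3, Q r s * X s p) + t r

/-- Geometric relation extractor `T_R(X_i, X_j) = A_iᵀ ((w_i w_jᵀ) ⊙ D(X_i, X_j)) A_j`. -/
def TR {ci cj d : ℕ} (Ai : Matrix (Fin ci) (Fin d) ℝ) (Aj : Matrix (Fin cj) (Fin d) ℝ)
    (wi : Fin ci → ℝ) (wj : Fin cj → ℝ)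
    (X : Matrix (Fin 3) (Fin ci) ℝ) (Y : Matrix (Fin 3) (Fin cj) ℝ) :
    Matrix (Fin d) (Fin d) ℝ :=
  Aiᵀ * (Matrix.of fun p q => wi p * wj q * colDist X Y p q) * Aj

/-- Frobenius norm of a real matrix. -/
def frob {n m : ℕ} (M : Matrix (Fin n) (Fin m) ℝ) : ℝ :=
  Real.sqrt (∑ i : Fin n, ∑ j : Fin m, (M i j) ^ 2)

/-- Average pooling of `s ∈ ℝ^C` with window size `C − c + 1` and stride 1. -/
def avgPool {c C : ℕ} (hc : c ≤ C) (s : Fin C → ℝ) : Fin c → ℝ :=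
  fun k => (∑ m : Fin (C - c + 1), s ⟨k.val + m.val, by omega⟩) / ((C - c + 1 : ℕ) : ℝ)

/-- Geometric message scaler `T_S(X, s) = X · diag(s')`. -/
def TS {c C : ℕ} (hc : c ≤ C) (X : Matrix (Fin 3) (Fin c) ℝ) (s : Fin C → ℝ) :
    Matrix (Fin 3) (Fin c) ℝ :=
  Matrix.of fun r p => X r p * avgPool hc s p

/-- The per-vertex parameters and topology of one graph: attribute matrices `A_i`,
channel weights `w_i`, neighborhoods `N`, and the channel-size bound `c(i) ≤ C`. -/
structure GraphParams (V : Type*) (d m' C : ℕ) (c : V → ℕ) where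
  A : (i : V) → Matrix (Fin (c i)) (Fin d) ℝ
  w : (i : V) → Fin (c i) → ℝ
  N : V → Finset V
  hC : ∀ i, c i ≤ C

/-- The (arbitrary) functions `φ_m`, `φ_x`, `φ_h` of one message-passing layer. -/
structure LayerFuns (d dh m' C : ℕ) where
  φm : (Fin dh → ℝ) → (Fin dh → ℝ) → Matrix (Fin d) (Fin d) ℝ → (Fin m' → ℝ)
  φx : (Fin m' → ℝ) → (Fin C → ℝ)
  φh : (Fin dh → ℝ) → (Fin m' → ℝ) → (Fin dh → ℝ)

variable {V : Type*} {d dh m' C : ℕ}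

/-- Non-geometric message `m_{ij}`. -/
def msgOf {c : V → ℕ} (G : GraphParams V d m' C c) (F : LayerFuns d dh m' C)
    (h : V → Fin dh → ℝ) (X : (i : V) → Matrix (Fin 3) (Fin (c i)) ℝ)
    (i j : V) : Fin m' → ℝ :=
  F.φm (h i) (h j)
    ((frob (TR (G.A i) (G.A j) (G.w i) (G.w j) (X i) (X j)) + 1)⁻¹ •
      TR (G.A i) (G.A j) (G.w i) (G.w j) (X i) (X j))

/-- Geometric message `X_{ij} = T_S(X_i − μ_j 1ᵀ, φ_x(m_{ij}))`. -/
def xMsgOf {c : V → ℕ} (G : GraphParams V d m' C c) (F : LayerFuns d dh m' C)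
    (h : V → Fin dh → ℝ) (X : (i : V) → Matrix (Fin 3) (Fin (c i)) ℝ)
    (i j : V) : Matrix (Fin 3) (Fin (c i)) ℝ :=
  TS (G.hC i) (Matrix.of fun r p => X i r p - (∑ q : Fin (c j), X j r q) / ((c j : ℕ) : ℝ))
    (F.φx (msgOf G F h X i j))

/-- Hidden-state update `h'(i) = φ_h(h(i), Σ_{j ∈ N(i)} m_{ij})`. -/
def hOut {c : V → ℕ} (G : GraphParams V d m' C c) (F : LayerFuns d dh m' C)
    (h : V → Fin dh → ℝ) (X : (i : V) → Matrix (Fin 3) (Fin (c i)) ℝ)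
    (i : V) : Fin dh → ℝ :=
  F.φh (h i) (∑ j ∈ G.N i, msgOf G F h X i j)

/-- Coordinate update `X'(i) = X(i) + (1/|N(i)|) Σ_{j ∈ N(i)} X_{ij}`. -/
def xOut {c : V → ℕ} (G : GraphParams V d m' C c) (F : LayerFuns d dh m' C)
    (h : V → Fin dh → ℝ) (X : (i : V) → Matrix (Fin 3) (Fin (c i)) ℝ)
    (i : V) : Matrix (Fin 3) (Fin (c i)) ℝ :=
  X i + (((G.N i).card : ℝ))⁻¹ • ∑ j ∈ G.N i, xMsgOf G F h X i j

/-- The full state of the encoder: hidden states and coordinates of the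
epitope-with-shadow-paratope graph (`E`) and of the antibody graph (`A`). -/
structure EncState (VE VA : Type*) (dh : ℕ) (cE : VE → ℕ) (cA : VA → ℕ) where
  hE : VE → Fin dh → ℝ
  hA : VA → Fin dh → ℝ
  XE : (i : VE) → Matrix (Fin 3) (Fin (cE i)) ℝ
  XA : (j : VA) → Matrix (Fin 3) (Fin (cA j)) ℝ

variable {VE VA ιS : Type*}

/-- Copy the hidden states of the native paratope onto the shadow paratope:
`h(eS k) := hA(eP k)`. -/
def copyToShadow (eS : ιS → VE) (eP : ιS → VA)
    (hE : VE → Fin dh → ℝ) (hA : VA → Fin dh → ℝ) : VE → Fin dh → ℝ :=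
  fun i => if hk : ∃ k, eS k = i then hA (eP (Classical.choose hk)) else hE i

/-- Copy the hidden states of the shadow paratope back onto the native paratope:
`h(eP k) := hE(eS k)`. -/
def copyToNative (eS : ιS → VE) (eP : ιS → VA)
    (hE : VE → Fin dh → ℝ) (hA : VA → Fin dh → ℝ) : VA → Fin dh → ℝ :=
  fun j => if hk : ∃ k, eP k = j then hE (eS (Classical.choose hk)) else hA j

/-- One round of the alternating encoder: a message-passing layer on the antibody graph,
sharing of hidden states to the shadow paratope, a message-passing layer on the
epitope graph, and sharing of hidden states back to the native paratope. -/
def encStep {cE : VE → ℕ} {cA : VA → ℕ}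
    (GE : GraphParams VE d m' C cE) (GA : GraphParams VA d m' C cA)
    (eS : ιS → VE) (eP : ιS → VA)
    (FE FA : ℕ → LayerFuns d dh m' C) (l : ℕ)
    (st : EncState VE VA dh cE cA) : EncState VE VA dh cE cA :=
  let hA1 := fun j => hOut GA (FA l) st.hA st.XA j
  let XA1 := fun j => xOut GA (FA l) st.hA st.XA j
  let hE1 := copyToShadow eS eP st.hE hA1
  let hE2 := fun i => hOut GE (FE l) hE1 st.XE i
  let XE1 := fun i => xOut GE (FE l) hE1 st.XE i
  let hA2 := copyToNative eS eP hE2 hA1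
  ⟨hE2, hA2, XE1, XA1⟩

/-- The `L`-layer alternating encoder. -/
def encoder {cE : VE → ℕ} {cA : VA → ℕ}
    (GE : GraphParams VE d m' C cE) (GA : GraphParams VA d m' C cA)
    (eS : ιS → VE) (eP : ιS → VA)
    (FE FA : ℕ → LayerFuns d dh m' C) :
    ℕ → EncState VE VA dh cE cA → EncState VE VA dh cE cA
  | 0, st => st
  | l + 1, st => encoder GE GA eS eP FE FA l (encStep GE GA eS eP FE FA l st)

/-! The relation extractor `T_R` sees coordinates only through pairwise column distances,
which a rigid motion preserves; hence all messages `m_{ij}` and hidden states are invariant.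
The geometric message is built from `X(i) − μ_j 1ᵀ`, in which the translation cancels, and
`T_S` multiplies on the right by a diagonal matrix, so it commutes with `Q · _`; the coordinate
update is therefore equivariant. Each layer reads the coordinates of one graph only and the
exchange of hidden states between paratopes never touches coordinates, so the two graphs may
be moved by independent rigid motions. -/

lemma sum_sq_mulVec_of_transpose_mul_self {m n R : Type*} [Fintype m] [Fintype n]
    [DecidableEq n] [CommRing R] {Q : Matrix m n R} (hQ : Qᵀ * Q = 1) (v : n → R) :
    ∑ r, (Q *ᵥ v) r ^ 2 = ∑ s, v s ^ 2 := by
  have h : (Q *ᵥ v) ⬝ᵥ (Q *ᵥ v) = v ⬝ᵥ v := by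
    rw [dotProduct_mulVec, ← mulVec_transpose, mulVec_mulVec, hQ, one_mulVec]
  simpa only [dotProduct, sq] using h

lemma rigid_eq_mul_add {c : ℕ} (Q : Matrix (Fin 3) (Fin 3) ℝ) (t : Fin 3 → ℝ)
    (X : Matrix (Fin 3) (Fin c) ℝ) :
    rigid Q t X = Q * X + Matrix.of fun r _ => t r := by
  ext r p
  simp [rigid, Matrix.mul_apply]

lemma colDist_rigid {ci cj : ℕ} {Q : Matrix (Fin 3) (Fin 3) ℝ} (hQ : Qᵀ * Q = 1)
    (t : Fin 3 → ℝ) (X : Matrix (Fin 3) (Fin ci) ℝ) (Y : Matrix (Fin 3) (Fin cj) ℝ)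
    (p : Fin ci) (q : Fin cj) :
    colDist (rigid Q t X) (rigid Q t Y) p q = colDist X Y p q := by
  have hdiff : ∀ r, rigid Q t X r p - rigid Q t Y r q = (Q *ᵥ fun s => X s p - Y s q) r := by
    intro r
    simp only [rigid, Matrix.of_apply, mulVec, dotProduct, mul_sub, Finset.sum_sub_distrib]
    ring
  simp only [colDist, hdiff, sum_sq_mulVec_of_transpose_mul_self hQ]

lemma TR_rigid {ci cj d : ℕ} {Q : Matrix (Fin 3) (Fin 3) ℝ} (hQ : Qᵀ * Q = 1)
    (t : Fin 3 → ℝ) (Ai : Matrix (Fin ci) (Fin d) ℝ) (Aj : Matrix (Fin cj) (Fin d) ℝ)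
    (wi : Fin ci → ℝ) (wj : Fin cj → ℝ)
    (X : Matrix (Fin 3) (Fin ci) ℝ) (Y : Matrix (Fin 3) (Fin cj) ℝ) :
    TR Ai Aj wi wj (rigid Q t X) (rigid Q t Y) = TR Ai Aj wi wj X Y := by
  simp only [TR, colDist_rigid hQ]

lemma TS_eq_mul_diagonal {c C : ℕ} (hc : c ≤ C) (X : Matrix (Fin 3) (Fin c) ℝ)
    (s : Fin C → ℝ) :
    TS hc X s = X * diagonal (avgPool hc s) := by
  ext r p
  simp [TS]

lemma TS_mul_left {c C : ℕ} (hc : c ≤ C) (Q : Matrix (Fin 3) (Fin 3) ℝ)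
    (X : Matrix (Fin 3) (Fin c) ℝ) (s : Fin C → ℝ) :
    TS hc (Q * X) s = Q * TS hc X s := by
  simp only [TS_eq_mul_diagonal, Matrix.mul_assoc]

-- For `cj = 0` the mean would be the junk value `0` and the translation would not cancel.
lemma rigid_sub_mean_rigid {ci cj : ℕ} (hcj : 0 < cj) (Q : Matrix (Fin 3) (Fin 3) ℝ)
    (t : Fin 3 → ℝ) (X : Matrix (Fin 3) (Fin ci) ℝ) (Y : Matrix (Fin 3) (Fin cj) ℝ) :
    (Matrix.of fun r p => rigid Q t X r p - (∑ q, rigid Q t Y r q) / (cj : ℝ))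
      = Q * Matrix.of fun r p => X r p - (∑ q, Y r q) / (cj : ℝ) := by
  have hcj' : (cj : ℝ) ≠ 0 := by positivity
  have hsum : ∀ r, ∑ q, rigid Q t Y r q = ∑ s, Q r s * ∑ q, Y s q + cj * t r := by
    intro r
    simp only [rigid, Matrix.of_apply, Finset.sum_add_distrib, Finset.sum_const,
      Finset.card_univ, Fintype.card_fin, nsmul_eq_mul, Finset.mul_sum]
    rw [Finset.sum_comm]
  ext r p
  rw [Matrix.of_apply, hsum, Matrix.mul_apply, add_div, mul_div_cancel_left₀ _ hcj',
    Finset.sum_div]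
  simp only [rigid, Matrix.of_apply, mul_sub, Finset.sum_sub_distrib, mul_div_assoc]
  ring

section Layer

variable {c : V → ℕ} (G : GraphParams V d m' C c) (F : LayerFuns d dh m' C)
  (h : V → Fin dh → ℝ) (X : (i : V) → Matrix (Fin 3) (Fin (c i)) ℝ)
  {Q : Matrix (Fin 3) (Fin 3) ℝ} (t : Fin 3 → ℝ)

lemma msgOf_rigid (hQ : Qᵀ * Q = 1) :
    msgOf G F h (fun i => rigid Q t (X i)) = msgOf G F h X := by
  ext i j
  simp only [msgOf, TR_rigid hQ]

lemma hOut_rigid (hQ : Qᵀ * Q = 1) :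
    hOut G F h (fun i => rigid Q t (X i)) = hOut G F h X := by
  ext i
  simp only [hOut, msgOf_rigid G F h X t hQ]

lemma xMsgOf_rigid (hQ : Qᵀ * Q = 1) (hc : ∀ i, 0 < c i) (i j : V) :
    xMsgOf G F h (fun i => rigid Q t (X i)) i j = Q * xMsgOf G F h X i j := by
  simp only [xMsgOf, msgOf_rigid G F h X t hQ, rigid_sub_mean_rigid (hc j), TS_mul_left]

lemma xOut_rigid (hQ : Qᵀ * Q = 1) (hc : ∀ i, 0 < c i) (i : V) :
    xOut G F h (fun i => rigid Q t (X i)) i = rigid Q t (xOut G F h X i) := by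
  simp only [xOut, xMsgOf_rigid G F h X t hQ hc]
  rw [← Matrix.mul_sum, ← Matrix.mul_smul, rigid_eq_mul_add, rigid_eq_mul_add, Matrix.mul_add]
  abel

end Layer

def EncState.rigid {cE : VE → ℕ} {cA : VA → ℕ} (Q₁ Q₂ : Matrix (Fin 3) (Fin 3) ℝ)
    (t₁ t₂ : Fin 3 → ℝ) (st : EncState VE VA dh cE cA) : EncState VE VA dh cE cA :=
  ⟨st.hE, st.hA, fun i => _root_.rigid Q₁ t₁ (st.XE i), fun j => _root_.rigid Q₂ t₂ (st.XA j)⟩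

section Encoder

variable {cE : VE → ℕ} {cA : VA → ℕ} (hposE : ∀ i, 0 < cE i) (hposA : ∀ j, 0 < cA j)
  (GE : GraphParams VE d m' C cE) (GA : GraphParams VA d m' C cA)
  (eS : ιS → VE) (eP : ιS → VA) (FE FA : ℕ → LayerFuns d dh m' C)
  {Q₁ Q₂ : Matrix (Fin 3) (Fin 3) ℝ} (hQ₁ : Q₁ᵀ * Q₁ = 1) (hQ₂ : Q₂ᵀ * Q₂ = 1)
  (t₁ t₂ : Fin 3 → ℝ)
include hposE hposA hQ₁ hQ₂

lemma encStep_rigid (l : ℕ) (st : EncState VE VA dh cE cA) :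
    encStep GE GA eS eP FE FA l (st.rigid Q₁ Q₂ t₁ t₂)
      = (encStep GE GA eS eP FE FA l st).rigid Q₁ Q₂ t₁ t₂ := by
  simp only [encStep, EncState.rigid, hOut_rigid _ _ _ _ _ hQ₁, hOut_rigid _ _ _ _ _ hQ₂,
    xOut_rigid _ _ _ _ _ hQ₁ hposE, xOut_rigid _ _ _ _ _ hQ₂ hposA]

lemma encoder_rigid (L : ℕ) (st : EncState VE VA dh cE cA) :
    encoder GE GA eS eP FE FA L (st.rigid Q₁ Q₂ t₁ t₂)
      = (encoder GE GA eS eP FE FA L st).rigid Q₁ Q₂ t₁ t₂ := by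
  induction L generalizing st with
  | zero => rfl
  | succ L ih =>
    simp only [encoder, encStep_rigid hposE hposA GE GA eS eP FE FA hQ₁ hQ₂, ih]

end Encoder

theorem encoder_independent_E3_equivariant_general
    {cE : VE → ℕ} {cA : VA → ℕ}
    (hposE : ∀ i, 0 < cE i) (hposA : ∀ j, 0 < cA j)
    (GE : GraphParams VE d m' C cE) (GA : GraphParams VA d m' C cA)
    (eS : ιS → VE) (eP : ιS → VA)
    (FE FA : ℕ → LayerFuns d dh m' C)
    (L : ℕ) (st : EncState VE VA dh cE cA)
    (Q₁ Q₂ : Matrix (Fin 3) (Fin 3) ℝ)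
    (hQ₁ : Q₁ᵀ * Q₁ = 1) (hQ₂ : Q₂ᵀ * Q₂ = 1)
    (t₁ t₂ : Fin 3 → ℝ) :
    (encoder GE GA eS eP FE FA L
        ⟨st.hE, st.hA, fun i => rigid Q₁ t₁ (st.XE i), fun j => rigid Q₂ t₂ (st.XA j)⟩).hE
      = (encoder GE GA eS eP FE FA L st).hE ∧
    (encoder GE GA eS eP FE FA L
        ⟨st.hE, st.hA, fun i => rigid Q₁ t₁ (st.XE i), fun j => rigid Q₂ t₂ (st.XA j)⟩).hA
      = (encoder GE GA eS eP FE FA L st).hA ∧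
    (∀ i, (encoder GE GA eS eP FE FA L
        ⟨st.hE, st.hA, fun i => rigid Q₁ t₁ (st.XE i), fun j => rigid Q₂ t₂ (st.XA j)⟩).XE i
      = rigid Q₁ t₁ ((encoder GE GA eS eP FE FA L st).XE i)) ∧
    (∀ j, (encoder GE GA eS eP FE FA L
        ⟨st.hE, st.hA, fun i => rigid Q₁ t₁ (st.XE i), fun j => rigid Q₂ t₂ (st.XA j)⟩).XA j
      = rigid Q₂ t₂ ((encoder GE GA eS eP FE FA L st).XA j)) := by
  have h := encoder_rigid hposE hposA GE GA eS eP FE FA hQ₁ hQ₂ t₁ t₂ L st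
  exact ⟨(congrArg EncState.hE h :), (congrArg EncState.hA h :),
    congrFun (congrArg EncState.XE h), congrFun (congrArg EncState.XA h)⟩

/-- The alternating encoder is independently E(3)-equivariant with respect to the
epitope-with-shadow-paratope graph and the antibody graph: transforming the input
coordinates of the two graphs by arbitrary rigid motions `(Q₁, t₁)` and `(Q₂, t₂)`
leaves all final hidden states unchanged and transforms the final coordinates of the
two graphs by `(Q₁, t₁)` and `(Q₂, t₂)`, respectively. -/
theorem encoder_independent_E3_equivariant
    [Fintype VE] [Fintype VA]
    {cE : VE → ℕ} {cA : VA → ℕ}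
    (hposE : ∀ i, 0 < cE i) (hposA : ∀ j, 0 < cA j)
    (GE : GraphParams VE d m' C cE) (GA : GraphParams VA d m' C cA)
    (hNE : ∀ i, (GE.N i).Nonempty) (hNA : ∀ j, (GA.N j).Nonempty)
    (eS : ιS → VE) (eP : ιS → VA)
    (hinjS : Function.Injective eS) (hinjP : Function.Injective eP)
    (hmatch : ∀ k, cE (eS k) = cA (eP k))
    (FE FA : ℕ → LayerFuns d dh m' C)
    (L : ℕ) (st : EncState VE VA dh cE cA)
    (Q₁ Q₂ : Matrix (Fin 3) (Fin 3) ℝ)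
    (hQ₁ : Q₁ᵀ * Q₁ = 1) (hQ₂ : Q₂ᵀ * Q₂ = 1)
    (t₁ t₂ : Fin 3 → ℝ) :
    (encoder GE GA eS eP FE FA L
        ⟨st.hE, st.hA, fun i => rigid Q₁ t₁ (st.XE i), fun j => rigid Q₂ t₂ (st.XA j)⟩).hE
      = (encoder GE GA eS eP FE FA L st).hE ∧
    (encoder GE GA eS eP FE FA L
        ⟨st.hE, st.hA, fun i => rigid Q₁ t₁ (st.XE i), fun j => rigid Q₂ t₂ (st.XA j)⟩).hA
      = (encoder GE GA eS eP FE FA L st).hA ∧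
    (∀ i, (encoder GE GA eS eP FE FA L
        ⟨st.hE, st.hA, fun i => rigid Q₁ t₁ (st.XE i), fun j => rigid Q₂ t₂ (st.XA j)⟩).XE i
      = rigid Q₁ t₁ ((encoder GE GA eS eP FE FA L st).XE i)) ∧
    (∀ j, (encoder GE GA eS eP FE FA L
        ⟨st.hE, st.hA, fun i => rigid Q₁ t₁ (st.XE i), fun j => rigid Q₂ t₂ (st.XA j)⟩).XA j
      = rigid Q₂ t₂ ((encoder GE GA eS eP FE FA L st).XA j)) :=
  encoder_independent_E3_equivariant_general hposE hposA GE GA eS eP FE FA L st Q₁ Q₂ hQ₁ hQ₂ t₁ t₂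

end
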